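/- Let G be a network, f̂ a pseudo-flow on G, and f′ a feasible maximum s–t flow in the residual graph G_{f̂}. Then f = f̂ + f′ (interpreted edge-wise, with backward residual flow subtracting from f̂) is a cut-saturating pseudo-flow on G: it satisfies capacity constraints, has the same excesses and deficits as f̂ at every non-terminal vertex, and saturates some s–t cut of G. -/

import Mathlib

/-!
If `s` could still reach `t` in the residual graph of `f = f̂ + f'`, pushing one unit of flow
along such a path would give a pseudo-flow `f''` whose net flows differ from those of `f` only
at `s` and `t`. Splitting `f'' - f̂` into its positive and negative parts writes `f''` as `f̂`
plus a feasible residual flow, whose value exceeds that of `f'` by one: a contradiction. So the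
vertices that reach `t` in `G_f` form the sink side of a cut that no residual edge enters, i.e.
a saturated cut.
-/

open Finset

/-- A flow network on vertex set `V`: integral capacities, a source `s` and a sink `t`. -/
structure Network (V : Type) where
  c : V → V → ℤ
  s : V
  t : V
  st_ne : s ≠ t
  cap_nonneg : ∀ u v, 0 ≤ c u v

variable {V : Type} [Fintype V] [DecidableEq V]

/-- A pseudo-flow: capacity constraints only. -/
def IsPseudoflow (N : Network V) (f : V → V → ℤ) : Prop :=
  ∀ u v, 0 ≤ f u v ∧ f u v ≤ N.c u v

def inflow (f : V → V → ℤ) (u : V) : ℤ := ∑ v, f v u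
def outflow (f : V → V → ℤ) (u : V) : ℤ := ∑ v, f u v
def netFlow (f : V → V → ℤ) (u : V) : ℤ := inflow f u - outflow f u
def exc (f : V → V → ℤ) (u : V) : ℤ := max (netFlow f u) 0
def deficit (f : V → V → ℤ) (u : V) : ℤ := max (- netFlow f u) 0

/-- A pre-flow: pseudo-flow with nonnegative excess at every non-terminal vertex. -/
def IsPreflow (N : Network V) (f : V → V → ℤ) : Prop :=
  IsPseudoflow N f ∧ ∀ u, u ≠ N.s → u ≠ N.t → 0 ≤ netFlow f u

/-- A feasible flow: pseudo-flow satisfying conservation at non-terminals. -/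
def IsFlow (N : Network V) (f : V → V → ℤ) : Prop :=
  IsPseudoflow N f ∧ ∀ u, u ≠ N.s → u ≠ N.t → netFlow f u = 0

/-- Value of a flow: net flow out of the source. -/
def flowValue (N : Network V) (f : V → V → ℤ) : ℤ := outflow f N.s - inflow f N.s

/-- Residual edge `(u,v)`: either the forward edge `(u,v)` is unsaturated, or the
backward edge of `(v,u)` carries positive flow. -/
def ResEdge (N : Network V) (f : V → V → ℤ) (u v : V) : Prop :=
  f u v < N.c u v ∨ 0 < f v u

/-- Reachability in the residual graph. -/
def ResReach (N : Network V) (f : V → V → ℤ) : V → V → Prop :=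
  Relation.ReflTransGen (ResEdge N f)

/-- Edge of the underlying network. -/
def GEdge (N : Network V) (u v : V) : Prop := 0 < N.c u v

/-- `f` saturates the cut `δ(S,T)`: every edge from `S` to `T` is at capacity and
every edge from `T` to `S` carries zero flow. -/
def SaturatesCut (N : Network V) (f : V → V → ℤ) (S T : Finset V) : Prop :=
  ∀ u ∈ S, ∀ v ∈ T, f u v = N.c u v ∧ f v u = 0

/-- `(S,T)` is an s–t cut partition of the vertices. -/
def IsCutPartition (N : Network V) (S T : Finset V) : Prop :=
  S ∪ T = Finset.univ ∧ Disjoint S T ∧ N.s ∈ S ∧ N.t ∈ T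

/-- Capacity of the cut `δ(S,T)`. -/
def cutCap (N : Network V) (S T : Finset V) : ℤ := ∑ u ∈ S, ∑ v ∈ T, N.c u v

/-- Valid heights for Push-Relabel: `h s = n`, `h t = 0`, and `h u ≤ h v + 1`
for every residual edge `(u,v)`. -/
def ValidHeights (N : Network V) (f : V → V → ℤ) (h : V → ℕ) : Prop :=
  h N.s = Fintype.card V ∧ h N.t = 0 ∧ ∀ u v, ResEdge N f u v → h u ≤ h v + 1

/-- A feasible flow on the residual graph `G_{f̂}`, given as a pair: `fwd` on the
forward residual copies (capacity `c - f̂`) and `bwd` on the backward residual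
copies (`bwd u v` flows on the backward copy of edge `(v,u)`, capacity `f̂ v u`),
with conservation at all non-terminals. -/
def ResFlowPair (N : Network V) (fh fwd bwd : V → V → ℤ) : Prop :=
  (∀ u v, 0 ≤ fwd u v ∧ fwd u v ≤ N.c u v - fh u v) ∧
  (∀ u v, 0 ≤ bwd u v ∧ bwd u v ≤ fh v u) ∧
  (∀ u, u ≠ N.s → u ≠ N.t → (∑ v, (fwd v u + bwd v u)) = ∑ v, (fwd u v + bwd u v))

/-- Value of a residual flow pair: net flow out of `s` in the residual graph. -/
def resVal (N : Network V) (fwd bwd : V → V → ℤ) : ℤ :=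
  (∑ v, (fwd N.s v + bwd N.s v)) - ∑ v, (fwd v N.s + bwd v N.s)

section ReachWithin

variable {α : Type*}

-- The step bound serves as the induction measure when augmenting along a path.
def ReachWithin (r : α → α → Prop) : ℕ → α → α → Prop
  | 0, a, b => a = b
  | n + 1, a, b => a = b ∨ ∃ c, r a c ∧ ReachWithin r n c b

variable {r r' : α → α → Prop}

lemma ReachWithin.succ : ∀ {n : ℕ} {a b : α}, ReachWithin r n a b → ReachWithin r (n + 1) a b
  | 0, _, _, h => .inl h
  | _ + 1, _, _, .inl h => .inl h
  | _ + 1, _, _, .inr ⟨c, hac, hcb⟩ => .inr ⟨c, hac, hcb.succ⟩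

lemma Relation.ReflTransGen.exists_reachWithin {a b : α} (h : Relation.ReflTransGen r a b) :
    ∃ n, ReachWithin r n a b := by
  induction h using Relation.ReflTransGen.head_induction_on with
  | refl => exact ⟨0, rfl⟩
  | head hac _ ih =>
    obtain ⟨n, hn⟩ := ih
    exact ⟨n + 1, .inr ⟨_, hac, hn⟩⟩

/-- A path that uses the lost edge `(u, v)` can be cut short to start at `v`. -/
lemma ReachWithin.of_forall_ne {u v : α} (hr : ∀ x y, r x y → ¬(x = u ∧ y = v) → r' x y) :
    ∀ {n : ℕ} {a b : α}, ReachWithin r n a b → ReachWithin r' n a b ∨ ReachWithin r' n v b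
  | 0, _, _, h => .inl h
  | _ + 1, _, _, .inl h => .inl (.inl h)
  | _ + 1, a, _, .inr ⟨c, hac, hcb⟩ => by
    by_cases hedge : a = u ∧ c = v
    · obtain ⟨-, rfl⟩ := hedge
      exact .inr ((hcb.of_forall_ne hr).elim id id).succ
    · exact (hcb.of_forall_ne hr).imp (fun h => .inr ⟨c, hr a c hac hedge, h⟩) ReachWithin.succ

end ReachWithin

section NetFlow

omit [DecidableEq V]

lemma netFlow_add (f g : V → V → ℤ) (w : V) :
    netFlow (f + g) w = netFlow f w + netFlow g w := by
  simp only [netFlow, inflow, outflow, Pi.add_apply, sum_add_distrib]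
  ring

lemma netFlow_sub (f g : V → V → ℤ) (w : V) :
    netFlow (f - g) w = netFlow f w - netFlow g w := by
  simp only [netFlow, inflow, outflow, Pi.sub_apply, sum_sub_distrib]
  ring

end NetFlow

def unitFlow (u v : V) : V → V → ℤ := fun a b => if a = u ∧ b = v then 1 else 0

lemma netFlow_unitFlow (u v w : V) :
    netFlow (unitFlow u v) w = (if w = v then 1 else 0) - (if w = u then 1 else 0) := by
  simp [netFlow, inflow, outflow, unitFlow, ite_and, sum_ite_irrel]

namespace IsPseudoflow

variable {N : Network V} {f : V → V → ℤ}

omit [Fintype V] in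
lemma add_unitFlow {u v : V} (hf : IsPseudoflow N f) (h : f u v < N.c u v) :
    IsPseudoflow N (f + unitFlow u v) := fun a b => by
  have := hf a b
  simp only [Pi.add_apply, unitFlow]
  split_ifs with hab
  · obtain ⟨rfl, rfl⟩ := hab
    omega
  · omega

omit [Fintype V] in
lemma sub_unitFlow {u v : V} (hf : IsPseudoflow N f) (h : 0 < f u v) :
    IsPseudoflow N (f - unitFlow u v) := fun a b => by
  have := hf a b
  simp only [Pi.sub_apply, unitFlow]
  split_ifs with hab
  · obtain ⟨rfl, rfl⟩ := hab
    omega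
  · omega

lemma exists_push {u v : V} (hf : IsPseudoflow N f) (he : ResEdge N f u v) :
    ∃ f', IsPseudoflow N f' ∧
      (∀ w, netFlow f' w = netFlow f w + (if w = v then 1 else 0) - (if w = u then 1 else 0)) ∧
      ∀ x y, ResEdge N f x y → ¬(x = u ∧ y = v) → ResEdge N f' x y := by
  rcases he with hfwd | hbwd
  · refine ⟨f + unitFlow u v, hf.add_unitFlow hfwd, fun w => ?_, fun x y hxy hne => ?_⟩
    · rw [netFlow_add, netFlow_unitFlow]
      ring
    · simp only [ResEdge, Pi.add_apply, unitFlow, if_neg hne] at hxy ⊢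
      split_ifs <;> omega
  · refine ⟨f - unitFlow v u, hf.sub_unitFlow hbwd, fun w => ?_, fun x y hxy hne => ?_⟩
    · rw [netFlow_sub, netFlow_unitFlow]
      ring
    · have hne' : ¬(y = v ∧ x = u) := fun ⟨hy, hx⟩ => hne ⟨hx, hy⟩
      simp only [ResEdge, Pi.sub_apply, unitFlow, if_neg hne'] at hxy ⊢
      split_ifs <;> omega

lemma exists_augment_of_reachWithin {b : V} :
    ∀ (n : ℕ) {f : V → V → ℤ} {u : V},
      IsPseudoflow N f → ReachWithin (ResEdge N f) n u b →
      ∃ f', IsPseudoflow N f' ∧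
        ∀ w, netFlow f' w = netFlow f w + (if w = b then 1 else 0) - (if w = u then 1 else 0)
  | 0, f, _, hf, rfl => ⟨f, hf, fun _ => by ring⟩
  | _ + 1, f, _, hf, .inl rfl => ⟨f, hf, fun _ => by ring⟩
  | n + 1, _, _, hf, .inr ⟨v, huv, hvb⟩ => by
    obtain ⟨f₁, hf₁, hnet₁, hkeep⟩ := hf.exists_push huv
    obtain ⟨f₂, hf₂, hnet₂⟩ :=
      exists_augment_of_reachWithin n hf₁ ((hvb.of_forall_ne hkeep).elim id id)
    exact ⟨f₂, hf₂, fun w => by rw [hnet₂, hnet₁]; ring⟩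

lemma exists_augment_of_resReach {u b : V} (hf : IsPseudoflow N f) (h : ResReach N f u b) :
    ∃ f', IsPseudoflow N f' ∧
      ∀ w, netFlow f' w = netFlow f w + (if w = b then 1 else 0) - (if w = u then 1 else 0) :=
  let ⟨n, hn⟩ := Relation.ReflTransGen.exists_reachWithin h
  exists_augment_of_reachWithin n hf hn

lemma exists_saturatesCut (hf : IsPseudoflow N f) (hst : ¬ResReach N f N.s N.t) :
    ∃ S T, IsCutPartition N S T ∧ SaturatesCut N f S T := by
  classical
  refine ⟨univ.filter (fun v => ¬ResReach N f v N.t), univ.filter (fun v => ResReach N f v N.t),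
    ⟨by rw [union_comm, filter_union_filter_not_eq], (disjoint_filter_filter_not _ _ _).symm,
      by simpa using hst, mem_filter.2 ⟨mem_univ _, .refl⟩⟩, ?_⟩
  intro a ha b hb
  simp only [mem_filter, mem_univ, true_and] at ha hb
  have hab : ¬ResEdge N f a b := fun he => ha (.head he hb)
  simp only [ResEdge, not_or, not_lt] at hab
  exact ⟨le_antisymm (hf a b).2 hab.1, le_antisymm hab.2 (hf b a).1⟩

end IsPseudoflow

/-- `f̂ + f'` for a residual flow `f' = (fwd, bwd)` on `G_{f̂}`. -/
def augment (fh fwd bwd : V → V → ℤ) : V → V → ℤ :=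
  fun u v => fh u v + fwd u v - bwd v u

section ResidualFlow

omit [DecidableEq V]

variable {N : Network V} {fh fwd bwd : V → V → ℤ}

lemma netFlow_augment (u : V) :
    netFlow (augment fh fwd bwd) u = netFlow fh u + netFlow (fwd + bwd) u := by
  simp only [netFlow, inflow, outflow, augment, Pi.add_apply, sum_add_distrib, sum_sub_distrib]
  ring

lemma netFlow_add_eq_zero_iff (u : V) :
    netFlow (fwd + bwd) u = 0 ↔ ∑ v, (fwd v u + bwd v u) = ∑ v, (fwd u v + bwd u v) := by
  simp only [netFlow, inflow, outflow, Pi.add_apply, sub_eq_zero]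

lemma resVal_eq (fh : V → V → ℤ) :
    resVal N fwd bwd = netFlow fh N.s - netFlow (augment fh fwd bwd) N.s := by
  rw [netFlow_augment]
  simp only [resVal, netFlow, inflow, outflow, Pi.add_apply]
  ring

namespace ResFlowPair

lemma isPseudoflow_augment (h : ResFlowPair N fh fwd bwd) :
    IsPseudoflow N (augment fh fwd bwd) := fun u v => by
  have := h.1 u v
  have := h.2.1 v u
  simp only [augment]
  omega

lemma netFlow_eq_zero (h : ResFlowPair N fh fwd bwd) {u : V} (hs : u ≠ N.s) (ht : u ≠ N.t) :
    netFlow (fwd + bwd) u = 0 :=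
  (netFlow_add_eq_zero_iff u).2 (h.2.2 u hs ht)

end ResFlowPair

lemma exists_resFlowPair_augment_eq {f : V → V → ℤ} (hfh : IsPseudoflow N fh)
    (hf : IsPseudoflow N f) (hnet : ∀ u, u ≠ N.s → u ≠ N.t → netFlow f u = netFlow fh u) :
    ∃ fwd bwd, ResFlowPair N fh fwd bwd ∧ augment fh fwd bwd = f := by
  set fwd : V → V → ℤ := fun u v => max (f u v - fh u v) 0
  set bwd : V → V → ℤ := fun u v => max (fh v u - f v u) 0
  have haug : augment fh fwd bwd = f := funext₂ fun u v => by
    have := max_zero_sub_max_neg_zero_eq_self (f u v - fh u v)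
    simp only [augment, fwd, bwd, neg_sub] at this ⊢
    omega
  refine ⟨fwd, bwd, ⟨fun u v => ?_, fun u v => ?_, fun u hs ht => ?_⟩, haug⟩
  · have := hf u v
    have := hfh u v
    exact ⟨le_max_right _ _, max_le (by omega) (by omega)⟩
  · have := hf v u
    have := hfh v u
    exact ⟨le_max_right _ _, max_le (by omega) this.1⟩
  · rw [← netFlow_add_eq_zero_iff]
    have := netFlow_augment (fh := fh) (fwd := fwd) (bwd := bwd) u
    rw [haug, hnet u hs ht] at this
    omega

end ResidualFlow

/-- adding a maximum feasible flow of the residual graph `G_{f̂}` to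
the pseudo-flow `f̂` (forward flow adds, backward flow subtracts) yields a
cut-saturating pseudo-flow with the same excesses and deficits at non-terminals. -/
theorem stmt10 (N : Network V) (fh fwd bwd : V → V → ℤ)
    (hpf : IsPseudoflow N fh)
    (hres : ResFlowPair N fh fwd bwd)
    (hmax : ∀ fwd' bwd', ResFlowPair N fh fwd' bwd' →
      resVal N fwd' bwd' ≤ resVal N fwd bwd) :
    IsPseudoflow N (fun u v => fh u v + fwd u v - bwd v u) ∧
    (∀ u, u ≠ N.s → u ≠ N.t →
      exc (fun a b => fh a b + fwd a b - bwd b a) u = exc fh u ∧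
      deficit (fun a b => fh a b + fwd a b - bwd b a) u = deficit fh u) ∧
    ∃ S T : Finset V, IsCutPartition N S T ∧
      SaturatesCut N (fun a b => fh a b + fwd a b - bwd b a) S T := by
  have hf := hres.isPseudoflow_augment
  have hnet : ∀ u, u ≠ N.s → u ≠ N.t → netFlow (augment fh fwd bwd) u = netFlow fh u :=
    fun u hs ht => by rw [netFlow_augment, hres.netFlow_eq_zero hs ht, add_zero]
  refine ⟨hf, fun u hs ht => ?_, hf.exists_saturatesCut fun hst => ?_⟩
  · exact ⟨congrArg (max · 0) (hnet u hs ht), congrArg (fun x => max (-x) 0) (hnet u hs ht)⟩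
  · obtain ⟨f', hf', hnet'⟩ := hf.exists_augment_of_resReach hst
    obtain ⟨fwd', bwd', hres', rfl⟩ := exists_resFlowPair_augment_eq hpf hf' fun u hs ht => by
      rw [hnet', if_neg ht, if_neg hs, hnet u hs ht]
      ring
    have hle := hmax fwd' bwd' hres'
    rw [resVal_eq fh, resVal_eq fh, hnet', if_neg N.st_ne, if_pos rfl] at hle
    omega
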